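/- Let A and B be positive definite d×d complex matrices. Then BA^{-1} has positive real eigenvalues, and log λ↓(B) − log λ↓(A) ≺ log λ(BA^{-1}) ≺ log λ↓(B) − log λ↑(A), where log is applied entrywise and ≺ denotes majorization. -/

import Mathlib

open Matrix Polynomial
open scoped ComplexOrder

/-- The vector `x` rearranged in non-increasing order. -/
noncomputable def sortDesc {d : ℕ} (x : Fin d → ℝ) : Fin d → ℝ :=
  fun i => x (Tuple.sort x i.rev)

/-- The vector `x` rearranged in non-decreasing order. -/
noncomputable def sortAsc {d : ℕ} (x : Fin d → ℝ) : Fin d → ℝ :=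
  fun i => x (Tuple.sort x i)

/-- `x` is submajorized by `y`. -/
noncomputable def Submajorizes {d : ℕ} (x y : Fin d → ℝ) : Prop :=
  ∀ k : Fin d, ∑ i ∈ Finset.Iic k, sortDesc x i ≤ ∑ i ∈ Finset.Iic k, sortDesc y i

/-- `x` is majorized by `y`. -/
noncomputable def Majorizes {d : ℕ} (x y : Fin d → ℝ) : Prop :=
  Submajorizes x y ∧ ∑ i, x i = ∑ i, y i

/-! Write `A = Q²` with `Q` Hermitian and put `C = Q⁻¹ B Q⁻¹`. Then `B A⁻¹ = Q C Q⁻¹` has the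
eigenvalues of the positive definite `C`, and both majorizations are instances of one inequality
for positive definite `A = Q* Q`, `B = Q* C Q` (the second one with `(A⁻¹, C, B, Q⁻¹)` in place of
`(A, B, C, Q)`): for any `k + 1` indices `S`, `∑_{i ∈ S} (log b↓ᵢ - log a↓ᵢ)` is at most the sum of
the `k + 1` largest `log cᵢ`.

For this, let `t = c↓ₖ` and let `C'` be `C` with its eigenvalues below `t` raised to `t`. Then
`B' = Q* C' Q` dominates both `B` and `t A` in the Loewner order, so by Weyl's monotonicity
`b↓ᵢ ≤ b'↓ᵢ` and `t a↓ᵢ ≤ b'↓ᵢ`. Hence `log b↓ᵢ - log a↓ᵢ ≤ log b'↓ᵢ - log a↓ᵢ` on `S` and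
`log t ≤ log b'↓ᵢ - log a↓ᵢ` off `S`, while `det B' = det C' · det A` and
`det C' = c↓₀ ⋯ c↓ₖ · t^(d-k-1)`. The equality of the total sums is `det B = det C · det A`. -/

open Finset

section Sorting

variable {d : ℕ}

lemma sortAsc_monotone (x : Fin d → ℝ) : Monotone (sortAsc x) := Tuple.monotone_sort x

lemma sortDesc_antitone (x : Fin d → ℝ) : Antitone (sortDesc x) :=
  fun _ _ hij => sortAsc_monotone x (Fin.rev_le_rev.2 hij)

noncomputable def sortDescPerm (x : Fin d → ℝ) : Equiv.Perm (Fin d) :=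
  Fin.revPerm.trans (Tuple.sort x)

lemma sortDesc_eq_comp (x : Fin d → ℝ) : sortDesc x = x ∘ sortDescPerm x := rfl

@[to_additive]
lemma prod_comp_sortDesc {M : Type*} [CommMonoid M] (g : ℝ → M) (x : Fin d → ℝ) :
    ∏ i, g (sortDesc x i) = ∏ j, g (x j) :=
  Equiv.prod_comp (sortDescPerm x) (g ∘ x)

lemma sortDesc_eq_of_map_eq {x y : Fin d → ℝ} (h : univ.val.map x = univ.val.map y) :
    sortDesc x = sortDesc y := by
  have hperm : (List.ofFn (sortAsc x)).Perm (List.ofFn (sortAsc y)) :=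
    ((Tuple.sort x).ofFn_comp_perm x).trans <|
      (Multiset.coe_eq_coe.1 (by simpa only [Fin.univ_val_map] using h)).trans
        ((Tuple.sort y).ofFn_comp_perm y).symm
  have hsort : sortAsc x = sortAsc y := List.ofFn_injective <|
    hperm.eq_of_sortedLE (List.sortedLE_ofFn_iff.2 (sortAsc_monotone x))
      (List.sortedLE_ofFn_iff.2 (sortAsc_monotone y))
  funext i
  exact congrFun hsort i.rev

lemma sortDesc_of_antitone {x : Fin d → ℝ} (hx : Antitone x) : sortDesc x = x := by
  have hsort : sortAsc x = x ∘ Fin.revPerm :=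
    (Tuple.comp_sort_eq_comp_iff_monotone.2 fun _ _ hij => hx (Fin.rev_le_rev.2 hij)).symm
  funext i
  simp [sortDesc, ← sortAsc.eq_def, hsort]

lemma sortDesc_comp_of_monotoneOn {g : ℝ → ℝ} {x : Fin d → ℝ}
    (hg : MonotoneOn g (Set.range x)) : sortDesc (g ∘ x) = g ∘ sortDesc x := by
  have hsort : sortAsc (g ∘ x) = g ∘ x ∘ Tuple.sort x :=
    (Tuple.comp_sort_eq_comp_iff_monotone.2 fun _ _ hij =>
      hg ⟨_, rfl⟩ ⟨_, rfl⟩ (sortAsc_monotone x hij)).symm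
  funext i
  exact congrFun hsort i.rev

lemma sortDesc_comp_of_antitoneOn {g : ℝ → ℝ} {x : Fin d → ℝ}
    (hg : AntitoneOn g (Set.range x)) : sortDesc (g ∘ x) = g ∘ sortAsc x := by
  have hsort : sortAsc (g ∘ x) = g ∘ x ∘ sortDescPerm x :=
    (Tuple.comp_sort_eq_comp_iff_monotone.2 fun _ _ hij =>
      hg ⟨_, rfl⟩ ⟨_, rfl⟩ (sortDesc_antitone x hij)).symm
  funext i
  simp [sortDesc, ← sortAsc.eq_def, hsort, sortDescPerm]

lemma Antitone.sum_le_sum_Iic {g : Fin d → ℝ} (hg : Antitone g) {k : Fin d}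
    {S : Finset (Fin d)} (hS : #S = k + 1) : ∑ i ∈ S, g i ≤ ∑ i ∈ Iic k, g i := by
  have hcard : #(S \ Iic k) = #(Iic k \ S) := card_sdiff_comm (by rw [hS, Fin.card_Iic])
  have hout : ∑ i ∈ S \ Iic k, g i ≤ #(S \ Iic k) • g k :=
    sum_le_card_nsmul _ _ _ fun i hi => hg (not_le.1 (mem_Iic.not.1 (mem_sdiff.1 hi).2)).le
  have hin : #(Iic k \ S) • g k ≤ ∑ i ∈ Iic k \ S, g i :=
    card_nsmul_le_sum _ _ _ fun i hi => hg (mem_Iic.1 (mem_sdiff.1 hi).1)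
  rw [← sum_inter_add_sum_sdiff S (Iic k), ← sum_inter_add_sum_sdiff (Iic k) S, inter_comm]
  rw [hcard] at hout
  linarith

lemma sum_le_sum_Iic_sortDesc (x : Fin d → ℝ) {k : Fin d} {S : Finset (Fin d)}
    (hS : #S = k + 1) : ∑ i ∈ S, x i ≤ ∑ i ∈ Iic k, sortDesc x i := by
  calc ∑ i ∈ S, x i = ∑ i ∈ S.map (sortDescPerm x).symm.toEmbedding, sortDesc x i := by
        simp [sortDesc_eq_comp]
    _ ≤ ∑ i ∈ Iic k, sortDesc x i := (sortDesc_antitone x).sum_le_sum_Iic (by simpa using hS)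

lemma exists_sum_eq_sum_Iic_sortDesc (x : Fin d → ℝ) (k : Fin d) :
    ∃ S : Finset (Fin d), #S = k + 1 ∧ ∑ i ∈ Iic k, sortDesc x i = ∑ i ∈ S, x i :=
  ⟨(Iic k).map (sortDescPerm x).toEmbedding, by simp, by simp [sortDesc_eq_comp]⟩

lemma add_one_le_card_filter_sortDesc_le (x : Fin d → ℝ) (k : Fin d) :
    k + 1 ≤ #{j | sortDesc x k ≤ x j} := by
  calc k + 1 = #((Iic k).map (sortDescPerm x).toEmbedding) := by simp
    _ ≤ _ := card_le_card fun j hj => by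
      obtain ⟨i, hi, rfl⟩ := mem_map.1 hj
      exact mem_filter.2 ⟨mem_univ _, sortDesc_antitone x (mem_Iic.1 hi)⟩

lemma le_card_filter_le_sortDesc_add (x : Fin d → ℝ) (k : Fin d) :
    d ≤ #{j | x j ≤ sortDesc x k} + k := by
  have : #((Ici k).map (sortDescPerm x).toEmbedding) ≤ #{j | x j ≤ sortDesc x k} :=
    card_le_card fun j hj => by
      obtain ⟨i, hi, rfl⟩ := mem_map.1 hj
      exact mem_filter.2 ⟨mem_univ _, sortDesc_antitone x (mem_Ici.1 hi)⟩
  simp only [card_map, Fin.card_Ici] at this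
  omega

lemma sum_comp_max_sortDesc {M : Type*} [AddCommMonoid M] (g : ℝ → M) (x : Fin d → ℝ)
    (k : Fin d) :
    ∑ j, g (max (x j) (sortDesc x k)) =
      ∑ i ∈ Iic k, g (sortDesc x i) + #(Iic k)ᶜ • g (sortDesc x k) := by
  rw [← sum_comp_sortDesc (fun y => g (max y (sortDesc x k))), ← sum_add_sum_compl (Iic k),
    ← sum_const]
  congr 1 <;> refine sum_congr rfl fun i hi => ?_
  · rw [max_eq_left (sortDesc_antitone x (mem_Iic.1 hi))]
  · rw [max_eq_right (sortDesc_antitone x (not_le.1 (mem_Iic.not.1 (mem_compl.1 hi))).le)]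

end Sorting

section Majorization

variable {d : ℕ}

lemma submajorizes_of_forall_card_eq {x y : Fin d → ℝ} (hy : Antitone y)
    (h : ∀ (k : Fin d) (S : Finset (Fin d)), #S = k + 1 → ∑ i ∈ S, x i ≤ ∑ i ∈ Iic k, y i) :
    Submajorizes x y := by
  intro k
  obtain ⟨S, hS, hsum⟩ := exists_sum_eq_sum_Iic_sortDesc x k
  rw [hsum, sortDesc_of_antitone hy]
  exact h k S hS

lemma submajorizes_of_antitone {x y : Fin d → ℝ} (hx : Antitone x)
    (h : ∀ k : Fin d, ∑ i ∈ Iic k, x i ≤ ∑ i ∈ Iic k, y i) : Submajorizes x y := fun k => by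
  rw [sortDesc_of_antitone hx]
  exact (h k).trans (sum_le_sum_Iic_sortDesc y (Fin.card_Iic k))

lemma Majorizes.sub_of_add {u v w : Fin d → ℝ} (hu : Antitone u) (hw : Antitone w)
    (h : Majorizes (u + v) w) : Majorizes u (w - v) := by
  refine ⟨submajorizes_of_antitone hu fun k => ?_, ?_⟩
  · have := (sum_le_sum_Iic_sortDesc (u + v) (Fin.card_Iic k)).trans (h.1 k)
    rw [sortDesc_of_antitone hw] at this
    simp only [Pi.add_apply, Pi.sub_apply, sum_add_distrib, sum_sub_distrib] at this ⊢
    linarith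
  · have := h.2
    simp only [Pi.add_apply, Pi.sub_apply, sum_add_distrib, sum_sub_distrib] at this ⊢
    linarith

end Majorization

open Real in
lemma sum_log_sub_log_add_nsmul_le {ι : Type*} [Fintype ι] [DecidableEq ι] {u v w : ι → ℝ}
    {t : ℝ} (hu : ∀ i, 0 < u i) (hv : ∀ i, 0 < v i) (ht : 0 < t) (huw : ∀ i, u i ≤ w i)
    (hvw : ∀ i, t * v i ≤ w i) (S : Finset ι) :
    ∑ i ∈ S, (log (u i) - log (v i)) + #Sᶜ • log t ≤ ∑ i, (log (w i) - log (v i)) := by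
  have hgap : ∀ i, log t ≤ log (w i) - log (v i) := fun i => by
    rw [le_sub_iff_add_le, ← log_mul ht.ne' (hv i).ne']
    exact log_le_log (mul_pos ht (hv i)) (hvw i)
  rw [← sum_add_sum_compl S]
  gcongr with i
  · exact hu i
  · exact huw i
  · exact card_nsmul_le_sum _ _ _ fun i _ => hgap i

lemma Submodule.exists_ne_zero_mem_of_finrank_lt_add {K V : Type*} [Field K] [AddCommGroup V]
    [Module K V] [FiniteDimensional K V] {s t : Submodule K V}
    (h : Module.finrank K V < Module.finrank K s + Module.finrank K t) :
    ∃ v ∈ s, v ∈ t ∧ v ≠ 0 := by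
  by_contra! hst
  exact h.not_ge (Submodule.finrank_add_finrank_le_of_disjoint (Submodule.disjoint_def.2 hst))

namespace Matrix

open Real
open scoped MatrixOrder

section QuadraticForms

variable {n : Type*} [Fintype n] [DecidableEq n]

lemma re_star_dotProduct_diagonal_mulVec (f : n → ℝ) (w : n → ℂ) :
    (star w ⬝ᵥ (diagonal (RCLike.ofReal ∘ f) *ᵥ w)).re = ∑ j, f j * Complex.normSq (w j) := by
  rw [dotProduct, Complex.re_sum]
  refine sum_congr rfl fun j _ => ?_
  rw [mulVec_diagonal, Function.comp_apply, Pi.star_apply, mul_left_comm, RCLike.star_def,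
    ← Complex.normSq_eq_conj_mul_self]
  simp

lemma re_star_dotProduct_self_eq_sum_normSq {U : Matrix n n ℂ} (hU : U ∈ unitaryGroup n ℂ)
    (v : n → ℂ) : (star v ⬝ᵥ v).re = ∑ j, Complex.normSq ((star U *ᵥ v) j) := by
  have h := re_star_dotProduct_diagonal_mulVec (fun _ => 1) (star U *ᵥ v)
  simp only [Function.comp_def, map_one, diagonal_one, one_mulVec, one_mul] at h
  rw [← h, star_mulVec, star_eq_conjTranspose, conjTranspose_conjTranspose, ← dotProduct_mulVec,
    mulVec_mulVec, ← star_eq_conjTranspose, mem_unitaryGroup_iff.1 hU, one_mulVec]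

variable {M : Matrix n n ℂ}

lemma IsHermitian.re_star_dotProduct_mulVec_eq_sum (hM : M.IsHermitian) (v : n → ℂ) :
    (star v ⬝ᵥ (M *ᵥ v)).re = ∑ j, hM.eigenvalues j *
      Complex.normSq ((star (hM.eigenvectorUnitary : Matrix n n ℂ) *ᵥ v) j) := by
  conv_lhs => rw [hM.spectral_theorem, Unitary.conjStarAlgAut_apply]
  rw [← mulVec_mulVec, ← mulVec_mulVec, dotProduct_mulVec, ← re_star_dotProduct_diagonal_mulVec,
    star_mulVec, star_eq_conjTranspose, conjTranspose_conjTranspose]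

lemma IsHermitian.exists_finrank_ge_forall_mulVec_eq_zero (hM : M.IsHermitian) (J : Finset n) :
    ∃ V : Submodule ℂ (n → ℂ), #J ≤ Module.finrank ℂ V ∧
      ∀ v ∈ V, ∀ j ∉ J, (star (hM.eigenvectorUnitary : Matrix n n ℂ) *ᵥ v) j = 0 := by
  set L := (LinearMap.funLeft ℂ ℂ (Subtype.val : ↥(Jᶜ : Finset n) → n)) ∘ₗ
    (star (hM.eigenvectorUnitary : Matrix n n ℂ)).mulVecLin
  refine ⟨LinearMap.ker L, ?_, fun v hv j hj => congrFun (LinearMap.mem_ker.1 hv) ⟨j, by simpa⟩⟩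
  have hrange : Module.finrank ℂ (LinearMap.range L) ≤ #Jᶜ :=
    (Submodule.finrank_le _).trans_eq (by rw [Module.finrank_fintype_fun_eq_card, Fintype.card_coe])
  have := L.finrank_range_add_finrank_ker
  rw [Module.finrank_fintype_fun_eq_card] at this
  rw [card_compl] at hrange
  have := card_le_univ J
  omega

lemma IsHermitian.mul_re_le_re_star_dotProduct_mulVec (hM : M.IsHermitian) {J : Finset n}
    {t : ℝ} (ht : ∀ j ∈ J, t ≤ hM.eigenvalues j) {v : n → ℂ}
    (hv : ∀ j ∉ J, (star (hM.eigenvectorUnitary : Matrix n n ℂ) *ᵥ v) j = 0) :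
    t * (star v ⬝ᵥ v).re ≤ (star v ⬝ᵥ (M *ᵥ v)).re := by
  rw [re_star_dotProduct_self_eq_sum_normSq hM.eigenvectorUnitary.2,
    hM.re_star_dotProduct_mulVec_eq_sum, mul_sum]
  refine sum_le_sum fun j _ => ?_
  by_cases hj : j ∈ J
  · exact mul_le_mul_of_nonneg_right (ht j hj) (Complex.normSq_nonneg _)
  · simp [hv j hj]

lemma IsHermitian.re_star_dotProduct_mulVec_le_mul (hM : M.IsHermitian) {J : Finset n}
    {s : ℝ} (hs : ∀ j ∈ J, hM.eigenvalues j ≤ s) {v : n → ℂ}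
    (hv : ∀ j ∉ J, (star (hM.eigenvectorUnitary : Matrix n n ℂ) *ᵥ v) j = 0) :
    (star v ⬝ᵥ (M *ᵥ v)).re ≤ s * (star v ⬝ᵥ v).re := by
  rw [re_star_dotProduct_self_eq_sum_normSq hM.eigenvectorUnitary.2,
    hM.re_star_dotProduct_mulVec_eq_sum, mul_sum]
  refine sum_le_sum fun j _ => ?_
  by_cases hj : j ∈ J
  · exact mul_le_mul_of_nonneg_right (hs j hj) (Complex.normSq_nonneg _)
  · simp [hv j hj]

end QuadraticForms

lemma PosDef.of_le {n : Type*} {A B : Matrix n n ℂ} (hA : A.PosDef) (hAB : A ≤ B) : B.PosDef := by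
  simpa using hA.add_posSemidef (le_iff.1 hAB)

section PositiveDefinite

variable {n : Type*} [Fintype n] [DecidableEq n]

lemma PosDef.exists_isHermitian_isUnit_mul_self_eq {A : Matrix n n ℂ} (hA : A.PosDef) :
    ∃ Q : Matrix n n ℂ, Q.IsHermitian ∧ IsUnit Q ∧ Q * Q = A := by
  have hQQ : CFC.sqrt A * CFC.sqrt A = A := CFC.sqrt_mul_sqrt_self A hA.posSemidef.nonneg
  refine ⟨CFC.sqrt A, (CFC.sqrt_nonneg A).posSemidef.isHermitian, ?_, hQQ⟩
  rw [isUnit_iff_isUnit_det]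
  exact isUnit_of_mul_isUnit_left (y := (CFC.sqrt A).det) <| by
    rw [← det_mul, hQQ]
    exact (isUnit_iff_isUnit_det A).1 hA.isUnit

lemma PosDef.sum_log_eigenvalues_star_mul_mul {A B C Q : Matrix n n ℂ}
    (hA : A.PosDef) (hB : B.PosDef) (hC : C.PosDef) (hAQ : A = star Q * Q)
    (hBQ : B = star Q * C * Q) :
    ∑ i, log (hB.isHermitian.eigenvalues i) =
      ∑ i, log (hC.isHermitian.eigenvalues i) + ∑ i, log (hA.isHermitian.eigenvalues i) := by
  have hdet : B.det = C.det * A.det := by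
    rw [hBQ, hAQ, det_mul, det_mul, det_mul]
    ring
  rw [hA.isHermitian.det_eq_prod_eigenvalues, hB.isHermitian.det_eq_prod_eigenvalues,
    hC.isHermitian.det_eq_prod_eigenvalues] at hdet
  have hprod : ∏ i, hB.isHermitian.eigenvalues i =
      (∏ i, hC.isHermitian.eigenvalues i) * ∏ i, hA.isHermitian.eigenvalues i := by
    exact_mod_cast hdet
  rw [← log_prod fun i _ => (hB.eigenvalues_pos i).ne',
    ← log_prod fun i _ => (hC.eigenvalues_pos i).ne',
    ← log_prod fun i _ => (hA.eigenvalues_pos i).ne', hprod,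
    log_mul (prod_pos fun i _ => hC.eigenvalues_pos i).ne'
      (prod_pos fun i _ => hA.eigenvalues_pos i).ne']

end PositiveDefinite

section SortedEigenvalues

variable {d : ℕ}

theorem sortDesc_eigenvalues_le_of_le {X Y : Matrix (Fin d) (Fin d) ℂ} (hX : X.IsHermitian)
    (hY : Y.IsHermitian) (hXY : X ≤ Y) (k : Fin d) :
    sortDesc hX.eigenvalues k ≤ sortDesc hY.eigenvalues k := by
  obtain ⟨V, hV, hVv⟩ := hX.exists_finrank_ge_forall_mulVec_eq_zero
    {j | sortDesc hX.eigenvalues k ≤ hX.eigenvalues j}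
  obtain ⟨W, hW, hWv⟩ := hY.exists_finrank_ge_forall_mulVec_eq_zero
    {j | hY.eigenvalues j ≤ sortDesc hY.eigenvalues k}
  obtain ⟨v, hvV, hvW, hv0⟩ :=
    Submodule.exists_ne_zero_mem_of_finrank_lt_add (s := V) (t := W) <| by
      have := add_one_le_card_filter_sortDesc_le hX.eigenvalues k
      have := le_card_filter_le_sortDesc_add hY.eigenvalues k
      rw [Module.finrank_fin_fun]
      omega
  have hX_le := hX.mul_re_le_re_star_dotProduct_mulVec (fun j hj => (mem_filter.1 hj).2)
    (hVv v hvV)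
  have hY_le := hY.re_star_dotProduct_mulVec_le_mul (fun j hj => (mem_filter.1 hj).2)
    (hWv v hvW)
  have hXY_le : (star v ⬝ᵥ (X *ᵥ v)).re ≤ (star v ⬝ᵥ (Y *ᵥ v)).re := by
    have := (Complex.nonneg_iff.1 ((le_iff.1 hXY).dotProduct_mulVec_nonneg v)).1
    rwa [sub_mulVec, dotProduct_sub, Complex.sub_re, sub_nonneg] at this
  have hv_pos : 0 < (star v ⬝ᵥ v).re :=
    (Complex.pos_iff.1 (dotProduct_star_self_pos_iff.2 hv0)).1
  exact le_of_mul_le_mul_right (hX_le.trans (hXY_le.trans hY_le)) hv_pos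

lemma IsHermitian.sortDesc_eigenvalues_of_charpoly_eq {M : Matrix (Fin d) (Fin d) ℂ}
    (hM : M.IsHermitian) {f : Fin d → ℝ}
    (h : M.charpoly = ∏ i, (Polynomial.X - Polynomial.C (f i : ℂ))) :
    sortDesc hM.eigenvalues = sortDesc f := by
  refine sortDesc_eq_of_map_eq (Multiset.map_injective Complex.ofReal_injective ?_)
  rw [Multiset.map_map, Multiset.map_map]
  have := hM.roots_charpoly_eq_eigenvalues
  rw [h, Polynomial.roots_prod _ _ (prod_ne_zero_iff.2 fun i _ => Polynomial.X_sub_C_ne_zero _)]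
    at this
  simpa using this.symm

lemma IsHermitian.sortDesc_eigenvalues_smul {A : Matrix (Fin d) (Fin d) ℂ} (hA : A.IsHermitian)
    {t : ℝ} (ht : 0 ≤ t) (htA : (t • A).IsHermitian) :
    sortDesc htA.eigenvalues = fun i => t * sortDesc hA.eigenvalues i := by
  rw [htA.sortDesc_eigenvalues_of_charpoly_eq (f := fun i => t * hA.eigenvalues i)
    (by rw [← cfc_const_mul_id t A, hA.charpoly_cfc_eq]; simp)]
  exact sortDesc_comp_of_monotoneOn (g := (t * ·)) fun _ _ _ _ hab =>
    mul_le_mul_of_nonneg_left hab ht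

lemma PosDef.sortDesc_eigenvalues_inv {A : Matrix (Fin d) (Fin d) ℂ} (hA : A.PosDef) :
    sortDesc hA.inv.isHermitian.eigenvalues =
      fun i => (sortAsc hA.isHermitian.eigenvalues i)⁻¹ := by
  rw [hA.inv.isHermitian.sortDesc_eigenvalues_of_charpoly_eq
    (f := fun i => (hA.isHermitian.eigenvalues i)⁻¹)
    (by rw [nonsing_inv_eq_ringInverse, ← cfc_ringInverse_id (R := ℝ) A hA.isUnit,
      hA.isHermitian.charpoly_cfc_eq]; simp)]
  refine sortDesc_comp_of_antitoneOn (g := (·⁻¹)) ?_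
  rintro _ ⟨i, rfl⟩ _ _ hab
  exact inv_anti₀ (hA.eigenvalues_pos i) hab

lemma PosDef.antitone_log_sortDesc_eigenvalues {A : Matrix (Fin d) (Fin d) ℂ} (hA : A.PosDef) :
    Antitone fun i => log (sortDesc hA.isHermitian.eigenvalues i) :=
  fun _ _ hij => log_le_log (hA.eigenvalues_pos _) (sortDesc_antitone _ hij)

theorem PosDef.sum_log_sortDesc_eigenvalues_sub_le {A B C Q : Matrix (Fin d) (Fin d) ℂ}
    (hA : A.PosDef) (hB : B.PosDef) (hC : C.PosDef) (hAQ : A = star Q * Q)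
    (hBQ : B = star Q * C * Q) (k : Fin d) {S : Finset (Fin d)} (hS : #S = k + 1) :
    ∑ i ∈ S, (log (sortDesc hB.isHermitian.eigenvalues i) -
        log (sortDesc hA.isHermitian.eigenvalues i)) ≤
      ∑ i ∈ Iic k, log (sortDesc hC.isHermitian.eigenvalues i) := by
  set t := sortDesc hC.isHermitian.eigenvalues k
  have ht : 0 < t := hC.eigenvalues_pos _
  set C' := cfc (fun x => max x t) C
  have hCC' : C ≤ C' := by
    calc C = cfc id C := (cfc_id ℝ C).symm
      _ ≤ C' := cfc_mono fun x _ => le_max_left x t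
  have htC' : t • 1 ≤ C' := by
    calc t • 1 = cfc (fun _ => t) C := by rw [cfc_const t C, Algebra.algebraMap_eq_smul_one]
      _ ≤ C' := cfc_mono fun x _ => le_max_right x t
  have hC' : C'.PosDef := hC.of_le hCC'
  set B' := star Q * C' * Q
  have hBB' : B ≤ B' := by
    rw [hBQ]
    exact star_left_conjugate_le_conjugate hCC' Q
  have htAB' : t • A ≤ B' := by
    have := star_left_conjugate_le_conjugate htC' Q
    rwa [mul_smul_comm, mul_one, smul_mul_assoc, ← hAQ] at this
  have hB' : B'.PosDef := hB.of_le hBB'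
  have hlogC' : ∑ i, log (hC'.isHermitian.eigenvalues i) =
      ∑ i ∈ Iic k, log (sortDesc hC.isHermitian.eigenvalues i) + #(Iic k)ᶜ • log t := by
    rw [← sum_comp_sortDesc, hC'.isHermitian.sortDesc_eigenvalues_of_charpoly_eq
      (f := fun i => max (hC.isHermitian.eigenvalues i) t)
      (by rw [hC.isHermitian.charpoly_cfc_eq]; simp), sum_comp_sortDesc (fun x => log x),
      sum_comp_max_sortDesc]
  have key := sum_log_sub_log_add_nsmul_le (u := sortDesc hB.isHermitian.eigenvalues)
    (v := sortDesc hA.isHermitian.eigenvalues) (w := sortDesc hB'.isHermitian.eigenvalues)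
    (fun i => hB.eigenvalues_pos _) (fun i => hA.eigenvalues_pos _) ht
    (sortDesc_eigenvalues_le_of_le hB.isHermitian hB'.isHermitian hBB')
    (fun i => by
      have := sortDesc_eigenvalues_le_of_le (hA.isHermitian.smul (IsSelfAdjoint.all t))
        hB'.isHermitian htAB' i
      rwa [hA.isHermitian.sortDesc_eigenvalues_smul ht.le] at this) S
  have hcard : #Sᶜ = #(Iic k)ᶜ := by rw [card_compl, card_compl, hS, Fin.card_Iic]
  rw [hcard, sum_sub_distrib (s := univ), sum_comp_sortDesc (fun x => log x),
    sum_comp_sortDesc (fun x => log x), PosDef.sum_log_eigenvalues_star_mul_mul hA hB' hC' hAQ rfl,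
    hlogC'] at key
  linarith

theorem PosDef.majorizes_log_sortDesc_eigenvalues {A B C Q : Matrix (Fin d) (Fin d) ℂ}
    (hA : A.PosDef) (hB : B.PosDef) (hC : C.PosDef) (hAQ : A = star Q * Q)
    (hBQ : B = star Q * C * Q) :
    Majorizes
      (fun i => log (sortDesc hB.isHermitian.eigenvalues i) -
        log (sortDesc hA.isHermitian.eigenvalues i))
      (fun i => log (sortDesc hC.isHermitian.eigenvalues i)) := by
  refine ⟨submajorizes_of_forall_card_eq hC.antitone_log_sortDesc_eigenvalues
    fun k S hS => hA.sum_log_sortDesc_eigenvalues_sub_le hB hC hAQ hBQ k hS, ?_⟩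
  rw [sum_sub_distrib, sum_comp_sortDesc (fun x => log x), sum_comp_sortDesc (fun x => log x),
    sum_comp_sortDesc (fun x => log x), hA.sum_log_eigenvalues_star_mul_mul hB hC hAQ hBQ]
  ring

end SortedEigenvalues

end Matrix

/-- Gelfand–Naimark–Lidskii: `B * A⁻¹` has positive real eigenvalues and
`log λ↓(B) - log λ↓(A) ≺ log λ(B * A⁻¹) ≺ log λ↓(B) - log λ↑(A)`. -/
theorem gnl_log_majorization_quotient (d : ℕ) (A B : Matrix (Fin d) (Fin d) ℂ)
    (hA : A.PosDef) (hB : B.PosDef) :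
    ∃ μ : Fin d → ℝ, (∀ i, 0 < μ i) ∧ Antitone μ ∧
      (B * A⁻¹).charpoly = ∏ i, (X - C (μ i : ℂ)) ∧
      Majorizes
        (fun i => Real.log (sortDesc hB.isHermitian.eigenvalues i)
          - Real.log (sortDesc hA.isHermitian.eigenvalues i))
        (fun i => Real.log (μ i)) ∧
      Majorizes (fun i => Real.log (μ i))
        (fun i => Real.log (sortDesc hB.isHermitian.eigenvalues i)
          - Real.log (sortAsc hA.isHermitian.eigenvalues i)) := by
  obtain ⟨Q, hQ, hQu, hQQ⟩ := hA.exists_isHermitian_isUnit_mul_self_eq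
  have hQdet : IsUnit Q.det := (isUnit_iff_isUnit_det Q).1 hQu
  have hQs : star Q = Q := hQ.eq
  set R := Q⁻¹
  have hR : star R = R := hQ.inv.eq
  have hQR : Q * R = 1 := mul_nonsing_inv Q hQdet
  have hRQ : R * Q = 1 := nonsing_inv_mul Q hQdet
  set M := star R * B * R
  have hM : M.PosDef :=
    hB.conjTranspose_mul_mul_same (mulVec_injective_iff_isUnit.2 (isUnit_nonsing_inv_iff.2 hQu))
  have hAQ : A = star Q * Q := by rw [hQs, hQQ]
  have hBQ : B = star Q * M * Q := by
    simp only [M, hQs, hR, ← mul_assoc, hQR, one_mul]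
    rw [mul_assoc, hRQ, mul_one]
  have hAR : A⁻¹ = star R * R := by rw [hR, ← Matrix.mul_inv_rev, hQQ]
  refine ⟨sortDesc hM.isHermitian.eigenvalues, fun i => hM.eigenvalues_pos _, sortDesc_antitone _,
    ?_, hA.majorizes_log_sortDesc_eigenvalues hB hM hAQ hBQ, ?_⟩
  · have hBA : B * A⁻¹ = Q * (M * R) := by
      simp only [M, hAR, hR, ← mul_assoc, hQR, one_mul]
    rw [hBA, charpoly_mul_comm, mul_assoc, hRQ, mul_one, hM.isHermitian.charpoly_eq]
    exact (prod_comp_sortDesc (fun x => X - C (x : ℂ)) _).symm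
  · have h := hA.inv.majorizes_log_sortDesc_eigenvalues hM hB hAR rfl
    simp only [hA.sortDesc_eigenvalues_inv, Real.log_inv, sub_neg_eq_add] at h
    exact h.sub_of_add hM.antitone_log_sortDesc_eigenvalues hB.antitone_log_sortDesc_eigenvalues
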